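/- Entropy Balog–Szemerédi–Gowers lemma: let X, Y be G-valued random variables with H(X,Y) ≥ H(X)+H(Y)−log K and H(X+Y) ≤ H(X)/2+H(Y)/2+log K. Construct X_1,X_2 as conditionally independent trials of X given Y, and then Y' so that (X_1,X_2,Y) and (X_1,Y') are conditionally independent given X_1 with (X_1,Y') a copy of (X_1,Y). Then X_2 and Y' are conditionally independent given (X_1,Y), H(X_2|X_1,Y) ≥ H(X)−log K, H(Y'|X_1,Y) ≥ H(Y)−log K, and H(X_2+Y' | X_1,Y) ≤ H(X)/2 + H(Y)/2 + 7 log K. -/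

import Mathlib

open Real
open scoped BigOperators Pointwise Classical

/-- A finitely supported probability space. -/
structure FinProb (Ω : Type*) [Fintype Ω] where
  p : Ω → ℝ
  nonneg : ∀ ω, 0 ≤ p ω
  sum_one : ∑ ω, p ω = 1

/-- Probability that the random variable `X` takes the value `s`. -/
noncomputable def prob {Ω S : Type*} [Fintype Ω] (μ : FinProb Ω) (X : Ω → S) (s : S) : ℝ :=
  ∑ ω, if X ω = s then μ.p ω else 0

/-- Shannon entropy of a discrete random variable. -/
noncomputable def entropy {Ω S : Type*} [Fintype Ω] (μ : FinProb Ω) (X : Ω → S) : ℝ :=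
  ∑ s ∈ Finset.univ.image X, Real.negMulLog (prob μ X s)

/-- Conditional Shannon entropy `H(X|Y) = H(X,Y) - H(Y)`. -/
noncomputable def condEntropy {Ω S T : Type*} [Fintype Ω] (μ : FinProb Ω)
    (X : Ω → S) (Y : Ω → T) : ℝ :=
  entropy μ (fun ω => (X ω, Y ω)) - entropy μ Y

/-- The essential range of a random variable: values attained with positive probability. -/
noncomputable def rangeF {Ω S : Type*} [Fintype Ω] (μ : FinProb Ω) (X : Ω → S) : Finset S :=
  (Finset.univ.image X).filter (fun s => prob μ X s ≠ 0)

/-- Two random variables (on possibly different spaces) have the same distribution. -/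
def IdentDist {Ω Ω' S : Type*} [Fintype Ω] [Fintype Ω'] (μ : FinProb Ω) (X : Ω → S)
    (μ' : FinProb Ω') (Y : Ω' → S) : Prop :=
  ∀ s, prob μ X s = prob μ' Y s

/-- Independence of two random variables. -/
def IndepRV {Ω S T : Type*} [Fintype Ω] (μ : FinProb Ω) (X : Ω → S) (Y : Ω → T) : Prop :=
  ∀ s t, prob μ (fun ω => (X ω, Y ω)) (s, t) = prob μ X s * prob μ Y t

/-- Joint independence of a finite family of random variables. -/
def IndepFam {Ω ι : Type*} [Fintype Ω] [Fintype ι] {S : ι → Type*}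
    (μ : FinProb Ω) (X : ∀ i, Ω → S i) : Prop :=
  ∀ f : ∀ i, S i, prob μ (fun ω i => X i ω) f = ∏ i, prob μ (X i) (f i)

/-- `X` and `Y` are conditionally independent given `W`. -/
def CondIndepGiven {Ω S T U : Type*} [Fintype Ω] (μ : FinProb Ω)
    (X : Ω → S) (Y : Ω → T) (W : Ω → U) : Prop :=
  ∀ s t u, prob μ (fun ω => (X ω, Y ω, W ω)) (s, t, u) * prob μ W u
    = prob μ (fun ω => (X ω, W ω)) (s, u) * prob μ (fun ω => (Y ω, W ω)) (t, u)

/-- `Y` is determined by `X` (almost surely). -/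
def Determines {Ω S T : Type*} [Fintype Ω] (μ : FinProb Ω) (X : Ω → S) (Y : Ω → T) : Prop :=
  ∃ f : S → T, ∀ ω, μ.p ω ≠ 0 → Y ω = f (X ω)

/-- The entropy transport distance between the distributions of `X` and `Y`:
the infimum of `H(Z)` over random variables `Z` (coupled with a copy `X'` of `X`)
such that `X' + Z` is distributed as `Y`. -/
noncomputable def transDist {Ω₁ Ω₂ G : Type*} [Fintype Ω₁] [Fintype Ω₂] [AddCommGroup G]
    (μ : FinProb Ω₁) (X : Ω₁ → G) (ν : FinProb Ω₂) (Y : Ω₂ → G) : ℝ :=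
  sInf {h : ℝ | ∃ (n : ℕ) (μ' : FinProb (Fin n)) (X' Z : Fin n → G),
    IdentDist μ' X' μ X ∧ IdentDist μ' (fun ω => X' ω + Z ω) ν Y ∧ entropy μ' Z = h}

/-- Conditioning a finitely supported probability space on an event `E`
(returning `μ` unchanged if `E` has zero probability). -/
noncomputable def condFinProb {Ω : Type*} [Fintype Ω] (μ : FinProb Ω) (E : Ω → Prop) :
    FinProb Ω :=
  if h : 0 < ∑ ω, if E ω then μ.p ω else 0 then
    { p := fun ω => if E ω then μ.p ω / (∑ ω', if E ω' then μ.p ω' else 0) else 0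
      nonneg := fun ω => by
        split
        · exact div_nonneg (μ.nonneg ω) h.le
        · exact le_refl 0
      sum_one := by
        have h' : ∀ ω, (if E ω then μ.p ω / (∑ ω', if E ω' then μ.p ω' else 0) else 0)
            = (if E ω then μ.p ω else 0) / (∑ ω', if E ω' then μ.p ω' else 0) := by
          intro ω; split <;> simp
        rw [Finset.sum_congr rfl (fun ω _ => h' ω), ← Finset.sum_div, div_self h.ne'] }
  else μ

/-!
Writing `H(X) = ∑ ω, p ω * -log P(X = X ω)`, the entropy inequalities needed become pointwise
comparisons of probabilities: a function of `X` has larger fibres than `X`, hence smaller entropy,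
and submodularity `H(A,B,C) + H(C) ≤ H(A,C) + H(B,C)` is Gibbs' inequality, an equality under
conditional independence.

Conditional independence turns `H(X₂ | X₁,Y)` and `H(Y' | X₁,Y)` into `H(X | Y)` and `H(Y | X)`,
which `H(X,Y) ≥ H(X) + H(Y) - log K` bounds from below. For the sum, write
`X₂ + Y' = (X₂ + Y) + (Y' - Y)` and `Y' - Y = (X₁ + Y') - (X₁ + Y)`: a decomposition `Z = P + Q`
with `Z` also a function of `R` gives `H(Z) + H(P,R) ≤ H(P) + H(Q) + H(R)`, and the conditional
independence of `Y` and `Y'` given `(X₁, X₂)` identifies the joint entropies left over, so that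
`H(X₂ + Y') ≤ 3 H(X+Y) + 3 H(X) + 3 H(Y) - 4 H(X,Y)`.
-/

section Entropy

variable {Ω S T U : Type*} [Fintype Ω] (μ : FinProb Ω)

theorem prob_nonneg (X : Ω → S) (s : S) : 0 ≤ prob μ X s :=
  Finset.sum_nonneg fun ω _ => ite_nonneg (μ.nonneg ω) le_rfl

theorem p_le_prob (X : Ω → S) (ω : Ω) : μ.p ω ≤ prob μ X (X ω) := by
  have h := Finset.single_le_sum (f := fun ω' => if X ω' = X ω then μ.p ω' else 0)
    (fun ω' _ => ite_nonneg (μ.nonneg ω') le_rfl) (Finset.mem_univ ω)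
  simpa [prob] using h

theorem prob_pos_of_p_ne_zero (X : Ω → S) {ω : Ω} (hω : μ.p ω ≠ 0) : 0 < prob μ X (X ω) :=
  ((μ.nonneg ω).lt_of_ne' hω).trans_le (p_le_prob μ X ω)

theorem prob_mono {X : Ω → S} {Y : Ω → T} {s : S} {t : T}
    (h : ∀ ω, μ.p ω ≠ 0 → X ω = s → Y ω = t) : prob μ X s ≤ prob μ Y t := by
  refine Finset.sum_le_sum fun ω _ => ?_
  by_cases hp : μ.p ω = 0
  · simp [hp]
  by_cases hX : X ω = s
  · simp [hX, h ω hp hX]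
  · simpa [hX] using ite_nonneg (μ.nonneg ω) le_rfl

theorem prob_congr {X : Ω → S} {Y : Ω → T} {s : S} {t : T} (h : ∀ ω, X ω = s ↔ Y ω = t) :
    prob μ X s = prob μ Y t :=
  le_antisymm (prob_mono μ fun ω _ => (h ω).1) (prob_mono μ fun ω _ => (h ω).2)

theorem sum_mul_comp_eq_sum_prob_mul {X : Ω → S} {A : Finset S} (hA : ∀ ω, X ω ∈ A)
    (g : S → ℝ) : ∑ ω, μ.p ω * g (X ω) = ∑ s ∈ A, prob μ X s * g s := by
  simp only [prob, Finset.sum_mul, ite_mul, zero_mul]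
  rw [Finset.sum_comm]
  simp [hA]

theorem sum_prob_eq_one {X : Ω → S} {A : Finset S} (hA : ∀ ω, X ω ∈ A) :
    ∑ s ∈ A, prob μ X s = 1 := by
  simpa [μ.sum_one] using (sum_mul_comp_eq_sum_prob_mul μ hA fun _ => 1).symm

theorem sum_prob_pair_left {A : Ω → S} {s : Finset S} (hA : ∀ ω, A ω ∈ s) (C : Ω → T)
    (c : T) : ∑ a ∈ s, prob μ (fun ω => (A ω, C ω)) (a, c) = prob μ C c := by
  simp only [prob, Prod.mk.injEq]
  rw [Finset.sum_comm]
  simp [ite_and, hA]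

theorem prob_comp_eq_sum {X : Ω → S} {A : Finset S} (hA : ∀ ω, X ω ∈ A) (f : S → T)
    (t : T) : prob μ (fun ω => f (X ω)) t = ∑ s ∈ A, prob μ X s * if f s = t then 1 else 0 := by
  rw [← sum_mul_comp_eq_sum_prob_mul μ hA]
  simp [prob]

theorem entropy_eq_sum_mul_neg_log (X : Ω → S) :
    entropy μ X = ∑ ω, μ.p ω * -log (prob μ X (X ω)) := by
  rw [sum_mul_comp_eq_sum_prob_mul μ (A := Finset.univ.image X) (by simp)
    fun s => -log (prob μ X s)]
  simp [entropy, negMulLog]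

theorem entropy_eq_sum_of_subset {X : Ω → S} {A : Finset S} (hA : ∀ ω, X ω ∈ A) :
    entropy μ X = ∑ s ∈ A, negMulLog (prob μ X s) := by
  rw [entropy_eq_sum_mul_neg_log,
    sum_mul_comp_eq_sum_prob_mul μ hA fun s => -log (prob μ X s)]
  simp [negMulLog]

theorem entropy_const (c : T) : entropy μ (fun _ => c) = 0 := by
  rw [entropy_eq_sum_of_subset μ (A := {c}) (by simp)]
  simp [prob, μ.sum_one]

theorem entropy_le_of_determines {X : Ω → S} {Y : Ω → T} (h : Determines μ X Y) :
    entropy μ Y ≤ entropy μ X := by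
  obtain ⟨f, hf⟩ := h
  rw [entropy_eq_sum_mul_neg_log, entropy_eq_sum_mul_neg_log]
  refine Finset.sum_le_sum fun ω _ => ?_
  by_cases hω : μ.p ω = 0
  · simp [hω]
  have hXY : prob μ X (X ω) ≤ prob μ Y (Y ω) :=
    prob_mono μ fun ω' hω' hX => by rw [hf ω' hω', hf ω hω, hX]
  have hlog := log_le_log (prob_pos_of_p_ne_zero μ X hω) hXY
  exact mul_le_mul_of_nonneg_left (neg_le_neg hlog) (μ.nonneg ω)

theorem entropy_eq_of_determines {X : Ω → S} {Y : Ω → T} (hXY : Determines μ X Y)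
    (hYX : Determines μ Y X) : entropy μ X = entropy μ Y :=
  le_antisymm (entropy_le_of_determines μ hYX) (entropy_le_of_determines μ hXY)

theorem entropy_pair_comm (X : Ω → S) (Y : Ω → T) :
    entropy μ (fun ω => (X ω, Y ω)) = entropy μ (fun ω => (Y ω, X ω)) :=
  entropy_eq_of_determines μ ⟨Prod.swap, fun _ _ => rfl⟩ ⟨Prod.swap, fun _ _ => rfl⟩

/-- Gibbs' inequality. -/
theorem sum_mul_neg_log_nonneg {q : Ω → ℝ} (hq : ∀ ω, μ.p ω ≠ 0 → 0 < q ω)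
    (hsum : ∑ ω, μ.p ω * q ω ≤ 1) : 0 ≤ ∑ ω, μ.p ω * -log (q ω) := by
  have hterm : ∀ ω, μ.p ω - μ.p ω * q ω ≤ μ.p ω * -log (q ω) := fun ω => by
    by_cases hω : μ.p ω = 0
    · simp [hω]
    have := log_le_sub_one_of_pos (hq ω hω)
    nlinarith [μ.nonneg ω]
  calc (0 : ℝ) ≤ ∑ ω, μ.p ω - ∑ ω, μ.p ω * q ω := by rw [μ.sum_one]; linarith
    _ = ∑ ω, (μ.p ω - μ.p ω * q ω) := (Finset.sum_sub_distrib _ _).symm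
    _ ≤ ∑ ω, μ.p ω * -log (q ω) := Finset.sum_le_sum fun ω _ => hterm ω

noncomputable def condMutualInfo (A : Ω → S) (B : Ω → T) (C : Ω → U) : ℝ :=
  entropy μ (fun ω => (A ω, C ω)) + entropy μ (fun ω => (B ω, C ω))
    - entropy μ (fun ω => (A ω, B ω, C ω)) - entropy μ C

variable (A : Ω → S) (B : Ω → T) (C : Ω → U)

theorem condMutualInfo_eq_sum : condMutualInfo μ A B C = ∑ ω, μ.p ω *
    (log (prob μ (fun ω => (A ω, B ω, C ω)) (A ω, B ω, C ω)) + log (prob μ C (C ω))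
      - log (prob μ (fun ω => (A ω, C ω)) (A ω, C ω))
      - log (prob μ (fun ω => (B ω, C ω)) (B ω, C ω))) := by
  simp only [condMutualInfo, entropy_eq_sum_mul_neg_log, ← Finset.sum_add_distrib,
    ← Finset.sum_sub_distrib]
  exact Finset.sum_congr rfl fun ω _ => by ring

/-- `p(a,c) p(b,c) / p(c)` is a sub-probability mass function. -/
theorem sum_mul_prob_div_prob_le_one :
    ∑ ω, μ.p ω * (prob μ (fun ω => (A ω, C ω)) (A ω, C ω)
      * prob μ (fun ω => (B ω, C ω)) (B ω, C ω)
      / (prob μ (fun ω => (A ω, B ω, C ω)) (A ω, B ω, C ω) * prob μ C (C ω))) ≤ 1 := by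
  classical
  set sA := Finset.univ.image A
  set sB := Finset.univ.image B
  set sC := Finset.univ.image C
  have hA : ∀ ω, A ω ∈ sA := by simp [sA]
  have hB : ∀ ω, B ω ∈ sB := by simp [sB]
  have hC : ∀ ω, C ω ∈ sC := by simp [sC]
  have hABC : ∀ ω, (A ω, B ω, C ω) ∈ sA ×ˢ sB ×ˢ sC := by simp [hA, hB, hC]
  calc _ = ∑ t ∈ sA ×ˢ sB ×ˢ sC, prob μ (fun ω => (A ω, B ω, C ω)) t
        * (prob μ (fun ω => (A ω, C ω)) (t.1, t.2.2) * prob μ (fun ω => (B ω, C ω)) t.2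
          / (prob μ (fun ω => (A ω, B ω, C ω)) t * prob μ C t.2.2)) :=
        sum_mul_comp_eq_sum_prob_mul μ hABC _
    _ ≤ ∑ t ∈ sA ×ˢ sB ×ˢ sC, prob μ (fun ω => (A ω, C ω)) (t.1, t.2.2)
          * prob μ (fun ω => (B ω, C ω)) t.2 / prob μ C t.2.2 := by
        refine Finset.sum_le_sum fun t _ => ?_
        by_cases ht : prob μ (fun ω => (A ω, B ω, C ω)) t = 0
        · simp only [ht, zero_mul]
          exact div_nonneg (mul_nonneg (prob_nonneg μ _ _) (prob_nonneg μ _ _))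
            (prob_nonneg μ _ _)
        · rw [← mul_div_assoc, mul_div_mul_left _ _ ht]
    _ = ∑ c ∈ sC, (∑ a ∈ sA, prob μ (fun ω => (A ω, C ω)) (a, c))
          * (∑ b ∈ sB, prob μ (fun ω => (B ω, C ω)) (b, c)) / prob μ C c := by
        simp only [Finset.sum_product, Finset.sum_mul_sum, Finset.sum_div]
        exact (Finset.sum_congr rfl fun _ _ => Finset.sum_comm).trans Finset.sum_comm
    _ = 1 := by
        simp only [sum_prob_pair_left μ hA, sum_prob_pair_left μ hB, mul_self_div_self]
        exact sum_prob_eq_one μ hC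

theorem condMutualInfo_nonneg : 0 ≤ condMutualInfo μ A B C := by
  rw [condMutualInfo_eq_sum]
  refine (sum_mul_neg_log_nonneg μ (fun ω hω => ?_)
    (sum_mul_prob_div_prob_le_one μ A B C)).trans_eq (Finset.sum_congr rfl fun ω _ => ?_)
  · exact div_pos (mul_pos (prob_pos_of_p_ne_zero μ _ hω) (prob_pos_of_p_ne_zero μ _ hω))
      (mul_pos (prob_pos_of_p_ne_zero μ _ hω) (prob_pos_of_p_ne_zero μ _ hω))
  by_cases hω : μ.p ω = 0
  · simp [hω]
  have h₁ := (prob_pos_of_p_ne_zero μ (fun ω => (A ω, C ω)) hω).ne'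
  have h₂ := (prob_pos_of_p_ne_zero μ (fun ω => (B ω, C ω)) hω).ne'
  have h₃ := (prob_pos_of_p_ne_zero μ (fun ω => (A ω, B ω, C ω)) hω).ne'
  have h₄ := (prob_pos_of_p_ne_zero μ C hω).ne'
  rw [log_div (mul_ne_zero h₁ h₂) (mul_ne_zero h₃ h₄), log_mul h₁ h₂, log_mul h₃ h₄]
  ring

end Entropy

section IdentDist

variable {Ω Ω' S T G : Type*} [Fintype Ω] [Fintype Ω'] {μ : FinProb Ω} {ν : FinProb Ω'}

theorem IdentDist.comp {X : Ω → S} {Y : Ω' → S} (h : IdentDist μ X ν Y) (f : S → T) :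
    IdentDist μ (fun ω => f (X ω)) ν (fun ω => f (Y ω)) := fun t => by
  classical
  have hX : ∀ ω, X ω ∈ Finset.univ.image X ∪ Finset.univ.image Y := by simp
  have hY : ∀ ω, Y ω ∈ Finset.univ.image X ∪ Finset.univ.image Y := by simp
  rw [prob_comp_eq_sum μ hX, prob_comp_eq_sum ν hY]
  exact Finset.sum_congr rfl fun s _ => by rw [h s]

theorem IdentDist.entropy_eq {X : Ω → S} {Y : Ω' → S} (h : IdentDist μ X ν Y) :
    entropy μ X = entropy ν Y := by
  classical
  have hX : ∀ ω, X ω ∈ Finset.univ.image X ∪ Finset.univ.image Y := by simp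
  have hY : ∀ ω, Y ω ∈ Finset.univ.image X ∪ Finset.univ.image Y := by simp
  rw [entropy_eq_sum_of_subset μ hX, entropy_eq_sum_of_subset ν hY]
  exact Finset.sum_congr rfl fun s _ => by rw [h s]

theorem IdentDist.entropy_fst_eq {X : Ω → S} {Y : Ω → T} {X' : Ω' → S} {Y' : Ω' → T}
    (h : IdentDist μ (fun ω => (X ω, Y ω)) ν (fun ω => (X' ω, Y' ω))) :
    entropy μ X = entropy ν X' :=
  (h.comp Prod.fst).entropy_eq

theorem IdentDist.entropy_snd_eq {X : Ω → S} {Y : Ω → T} {X' : Ω' → S} {Y' : Ω' → T}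
    (h : IdentDist μ (fun ω => (X ω, Y ω)) ν (fun ω => (X' ω, Y' ω))) :
    entropy μ Y = entropy ν Y' :=
  (h.comp Prod.snd).entropy_eq

theorem IdentDist.entropy_add_eq [AddCommGroup G] {X Y : Ω → G} {X' Y' : Ω' → G}
    (h : IdentDist μ (fun ω => (X ω, Y ω)) ν (fun ω => (X' ω, Y' ω))) :
    entropy μ (fun ω => X ω + Y ω) = entropy ν (fun ω => X' ω + Y' ω) :=
  (h.comp fun x => x.1 + x.2).entropy_eq

end IdentDist

section ConditionalEntropy

variable {Ω S T U V W : Type*} [Fintype Ω] (μ : FinProb Ω)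

theorem condMutualInfo_eq_zero {A : Ω → S} {B : Ω → T} {C : Ω → U}
    (h : CondIndepGiven μ A B C) : condMutualInfo μ A B C = 0 := by
  rw [condMutualInfo_eq_sum]
  refine Finset.sum_eq_zero fun ω _ => ?_
  by_cases hω : μ.p ω = 0
  · simp [hω]
  have h₁ := (prob_pos_of_p_ne_zero μ (fun ω => (A ω, C ω)) hω).ne'
  have h₂ := (prob_pos_of_p_ne_zero μ (fun ω => (B ω, C ω)) hω).ne'
  have h₃ := (prob_pos_of_p_ne_zero μ (fun ω => (A ω, B ω, C ω)) hω).ne'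
  have h₄ := (prob_pos_of_p_ne_zero μ C hω).ne'
  rw [← log_mul h₃ h₄, h, log_mul h₁ h₂]
  ring

theorem condEntropy_le_of_determines (A : Ω → S) {B : Ω → T} {C : Ω → U}
    (h : Determines μ B C) : condEntropy μ A B ≤ condEntropy μ A C := by
  obtain ⟨f, hf⟩ := h
  have hBC : entropy μ (fun ω => (B ω, C ω)) = entropy μ B :=
    entropy_eq_of_determines μ ⟨Prod.fst, fun _ _ => rfl⟩
      ⟨fun b => (b, f b), fun ω hω => by simp [hf ω hω]⟩
  have hABC : entropy μ (fun ω => (A ω, B ω, C ω)) = entropy μ (fun ω => (A ω, B ω)) :=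
    entropy_eq_of_determines μ ⟨fun t => (t.1, t.2.1), fun _ _ => rfl⟩
      ⟨fun t => (t.1, t.2, f t.2), fun ω hω => by simp [hf ω hω]⟩
  have := condMutualInfo_nonneg μ A B C
  simp only [condMutualInfo, condEntropy] at this ⊢
  linarith

theorem condEntropy_le_entropy (A : Ω → S) (B : Ω → T) : condEntropy μ A B ≤ entropy μ A :=
  calc condEntropy μ A B ≤ condEntropy μ A (fun _ => ()) :=
        condEntropy_le_of_determines μ A ⟨fun _ => (), fun _ _ => rfl⟩
    _ = entropy μ A := by
        rw [condEntropy, entropy_const, sub_zero]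
        exact entropy_eq_of_determines μ ⟨Prod.fst, fun _ _ => rfl⟩
          ⟨fun a => (a, ()), fun _ _ => rfl⟩

theorem entropy_pair_le (A : Ω → S) (B : Ω → T) :
    entropy μ (fun ω => (A ω, B ω)) ≤ entropy μ A + entropy μ B := by
  have := condEntropy_le_entropy μ A B
  rw [condEntropy] at this
  linarith

theorem condEntropy_pair_comm (A : Ω → S) (B : Ω → T) (C : Ω → U) :
    condEntropy μ A (fun ω => (B ω, C ω)) = condEntropy μ A (fun ω => (C ω, B ω)) := by
  simp only [condEntropy]
  rw [entropy_pair_comm μ B C, entropy_eq_of_determines μ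
    ⟨fun t => (t.1, t.2.2, t.2.1), fun _ _ => rfl⟩
    ⟨fun t => (t.1, t.2.2, t.2.1), fun _ _ => rfl⟩]

theorem entropy_add_entropy_le_of_determines {P : Ω → S} {Q : Ω → T} {R : Ω → U} {Z : Ω → V}
    {M : Ω → W} (hRZ : Determines μ R Z) (hPQZ : Determines μ (fun ω => (P ω, Q ω)) Z)
    (hPRM : Determines μ (fun ω => (P ω, R ω)) M) :
    entropy μ Z + entropy μ M ≤ entropy μ P + entropy μ Q + entropy μ R := by
  obtain ⟨g, hg⟩ := hPQZ
  have hM : entropy μ M ≤ entropy μ (fun ω => (P ω, R ω)) := entropy_le_of_determines μ hPRM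
  have hcond : condEntropy μ P R ≤ condEntropy μ P Z := condEntropy_le_of_determines μ P hRZ
  have hPZ : entropy μ (fun ω => (P ω, Z ω)) ≤ entropy μ (fun ω => (P ω, Q ω)) :=
    entropy_le_of_determines μ ⟨fun x => (x.1, g x), fun ω hω => by simp [hg ω hω]⟩
  have hPQ := entropy_pair_le μ P Q
  rw [condEntropy, condEntropy] at hcond
  linarith

end ConditionalEntropy

section CondIndep

variable {Ω S T U V : Type*} [Fintype Ω] {μ : FinProb Ω}

theorem CondIndepGiven.condEntropy_eq {A : Ω → S} {B : Ω → T} {C : Ω → U}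
    (h : CondIndepGiven μ A B C) :
    condEntropy μ A (fun ω => (B ω, C ω)) = condEntropy μ A C := by
  have := condMutualInfo_eq_zero _ h
  simp only [condMutualInfo, condEntropy] at this ⊢
  linarith

theorem CondIndepGiven.symm {A : Ω → S} {B : Ω → T} {C : Ω → U}
    (h : CondIndepGiven μ A B C) : CondIndepGiven μ B A C := fun t s u => by
  have e : prob μ (fun ω => (B ω, A ω, C ω)) (t, s, u)
      = prob μ (fun ω => (A ω, B ω, C ω)) (s, t, u) :=
    prob_congr μ fun ω => by simp only [Prod.mk.injEq]; tauto
  rw [e, h s t u, mul_comm]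

theorem CondIndepGiven.swap_left {P : Ω → S} {Q : Ω → T} {R : Ω → U} {W : Ω → V}
    (h : CondIndepGiven μ (fun ω => (P ω, Q ω)) R W) :
    CondIndepGiven μ (fun ω => (Q ω, P ω)) R W := fun ⟨q, p⟩ r w => by
  have e₁ : prob μ (fun ω => ((Q ω, P ω), R ω, W ω)) ((q, p), r, w)
      = prob μ (fun ω => ((P ω, Q ω), R ω, W ω)) ((p, q), r, w) :=
    prob_congr μ fun ω => by simp only [Prod.mk.injEq]; tauto
  have e₂ : prob μ (fun ω => ((Q ω, P ω), W ω)) ((q, p), w)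
      = prob μ (fun ω => ((P ω, Q ω), W ω)) ((p, q), w) :=
    prob_congr μ fun ω => by simp only [Prod.mk.injEq]; tauto
  rw [e₁, e₂]
  exact h (p, q) r w

theorem CondIndepGiven.snd_left {P : Ω → S} {Q : Ω → T} {R : Ω → U} {W : Ω → V}
    (h : CondIndepGiven μ (fun ω => (P ω, Q ω)) R W) :
    CondIndepGiven μ Q R W := fun q r w => by
  classical
  have hP : ∀ ω, P ω ∈ Finset.univ.image P := by simp
  have hsum := Finset.sum_congr rfl fun p (_ : p ∈ Finset.univ.image P) => h (p, q) r w
  rw [← Finset.sum_mul, ← Finset.sum_mul] at hsum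
  convert hsum using 2
  · rw [← sum_prob_pair_left μ hP]
    exact Finset.sum_congr rfl fun p _ => prob_congr μ fun ω => by
      simp only [Prod.mk.injEq]; tauto
  · rw [← sum_prob_pair_left μ hP]
    exact Finset.sum_congr rfl fun p _ => prob_congr μ fun ω => by
      simp only [Prod.mk.injEq]; tauto

theorem CondIndepGiven.weak_union {P : Ω → S} {Q : Ω → T} {R : Ω → U} {W : Ω → V}
    (h : CondIndepGiven μ (fun ω => (P ω, Q ω)) R W) :
    CondIndepGiven μ P R (fun ω => (W ω, Q ω)) := fun p r ⟨w, q⟩ => by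
  have e₁ : prob μ (fun ω => (P ω, R ω, W ω, Q ω)) (p, r, w, q)
      = prob μ (fun ω => ((P ω, Q ω), R ω, W ω)) ((p, q), r, w) :=
    prob_congr μ fun ω => by simp only [Prod.mk.injEq]; tauto
  have e₂ : prob μ (fun ω => (W ω, Q ω)) (w, q) = prob μ (fun ω => (Q ω, W ω)) (q, w) :=
    prob_congr μ fun ω => by simp only [Prod.mk.injEq]; tauto
  have e₃ : prob μ (fun ω => (P ω, W ω, Q ω)) (p, w, q)
      = prob μ (fun ω => ((P ω, Q ω), W ω)) ((p, q), w) :=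
    prob_congr μ fun ω => by simp only [Prod.mk.injEq]; tauto
  have e₄ : prob μ (fun ω => (R ω, W ω, Q ω)) (r, w, q)
      = prob μ (fun ω => (Q ω, R ω, W ω)) (q, r, w) :=
    prob_congr μ fun ω => by simp only [Prod.mk.injEq]; tauto
  rw [e₁, e₂, e₃, e₄]
  by_cases hw : prob μ W w = 0
  · have hQW : prob μ (fun ω => (Q ω, W ω)) (q, w) = 0 :=
      le_antisymm ((prob_mono μ fun _ _ h => congrArg Prod.snd h).trans_eq hw)
        (prob_nonneg μ _ _)
    have hPQW : prob μ (fun ω => ((P ω, Q ω), W ω)) ((p, q), w) = 0 :=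
      le_antisymm ((prob_mono μ fun _ _ h => congrArg Prod.snd h).trans_eq hw)
        (prob_nonneg μ _ _)
    rw [hQW, hPQW, mul_zero, zero_mul]
  · refine mul_right_cancel₀ hw ?_
    linear_combination prob μ (fun ω => (Q ω, W ω)) (q, w) * h (p, q) r w
      - prob μ (fun ω => ((P ω, Q ω), W ω)) ((p, q), w) * h.snd_left q r w

end CondIndep

section Sumset

variable {Ω G : Type*} [Fintype Ω] [AddCommGroup G] (μ : FinProb Ω)

theorem entropy_add_le_of_condIndepGiven {X₁ X₂ Y₀ Y' : Ω → G}
    (h : CondIndepGiven μ (fun ω => (X₂ ω, Y₀ ω)) Y' X₁) :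
    entropy μ (fun ω => X₂ ω + Y' ω) ≤ entropy μ (fun ω => X₂ ω + Y₀ ω)
      + entropy μ (fun ω => X₁ ω + Y' ω) + entropy μ (fun ω => X₁ ω + Y₀ ω)
      + entropy μ (fun ω => (X₁ ω, X₂ ω)) + entropy μ (fun ω => (Y₀ ω, Y' ω))
      - entropy μ (fun ω => (X₂ ω, X₁ ω, Y₀ ω))
      - entropy μ (fun ω => (Y' ω, X₁ ω, Y₀ ω)) := by
  have h₁ := entropy_add_entropy_le_of_determines μ (P := fun ω => X₂ ω + Y₀ ω)
    (Q := fun ω => Y' ω - Y₀ ω) (R := fun ω => (X₂ ω, Y' ω)) (Z := fun ω => X₂ ω + Y' ω)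
    (M := fun ω => (Y₀ ω, X₂ ω, Y' ω)) ⟨fun r => r.1 + r.2, fun _ _ => rfl⟩
    ⟨fun x => x.1 + x.2, fun _ _ => by dsimp only; abel⟩
    ⟨fun x => (x.1 - x.2.1, x.2), fun _ _ => by simp⟩
  have h₂ := entropy_add_entropy_le_of_determines μ (P := fun ω => X₁ ω + Y' ω)
    (Q := fun ω => X₁ ω + Y₀ ω) (R := fun ω => (Y₀ ω, Y' ω)) (Z := fun ω => Y' ω - Y₀ ω)
    (M := fun ω => (Y' ω, X₁ ω, Y₀ ω)) ⟨fun r => r.2 - r.1, fun _ _ => rfl⟩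
    ⟨fun x => x.1 - x.2, fun _ _ => by dsimp only; abel⟩
    ⟨fun x => (x.2.2, x.1 - x.2.2, x.2.1), fun _ _ => by simp⟩
  have hmono : condEntropy μ Y₀ (fun ω => (Y' ω, X₁ ω, X₂ ω))
      ≤ condEntropy μ Y₀ (fun ω => (X₂ ω, Y' ω)) :=
    condEntropy_le_of_determines μ Y₀ ⟨fun x => (x.2.2, x.1), fun _ _ => rfl⟩
  have hci : condEntropy μ Y₀ (fun ω => (Y' ω, X₁ ω, X₂ ω))
      = condEntropy μ Y₀ (fun ω => (X₁ ω, X₂ ω)) :=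
    h.swap_left.weak_union.condEntropy_eq
  have hperm :
      entropy μ (fun ω => (Y₀ ω, X₁ ω, X₂ ω)) = entropy μ (fun ω => (X₂ ω, X₁ ω, Y₀ ω)) :=
    entropy_eq_of_determines μ ⟨fun x => (x.2.2, x.2.1, x.1), fun _ _ => rfl⟩
      ⟨fun x => (x.2.2, x.2.1, x.1), fun _ _ => rfl⟩
  simp only [condEntropy] at hmono hci
  linarith

end Sumset

theorem entropy_bsg_general {G Ω Ω' : Type*} [AddCommGroup G] [Fintype Ω] [Fintype Ω']
    (μ : FinProb Ω) (X Y : Ω → G) (K : ℝ)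
    (hent : entropy μ (fun ω => (X ω, Y ω)) ≥ entropy μ X + entropy μ Y - Real.log K)
    (hsum : entropy μ (fun ω => X ω + Y ω) ≤
      entropy μ X / 2 + entropy μ Y / 2 + Real.log K)
    (μ' : FinProb Ω') (X₁ X₂ Y₀ Y' : Ω' → G)
    -- `X₁, X₂` are conditionally independent trials of `X` given `Y` (realised by `Y₀`):
    (hcopy₁ : IdentDist μ' (fun ω => (X₁ ω, Y₀ ω)) μ (fun ω => (X ω, Y ω)))
    (hcopy₂ : IdentDist μ' (fun ω => (X₂ ω, Y₀ ω)) μ (fun ω => (X ω, Y ω)))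
    (hci : CondIndepGiven μ' X₁ X₂ Y₀)
    -- `(X₁, Y')` is a copy of `(X₁, Y₀)`, with `(X₂, Y₀)` and `Y'` conditionally
    -- independent given `X₁`:
    (hcopy' : IdentDist μ' (fun ω => (X₁ ω, Y' ω)) μ' (fun ω => (X₁ ω, Y₀ ω)))
    (hci' : CondIndepGiven μ' (fun ω => (X₂ ω, Y₀ ω)) Y' X₁) :
    CondIndepGiven μ' X₂ Y' (fun ω => (X₁ ω, Y₀ ω)) ∧
    condEntropy μ' X₂ (fun ω => (X₁ ω, Y₀ ω)) ≥ entropy μ X - Real.log K ∧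
    condEntropy μ' Y' (fun ω => (X₁ ω, Y₀ ω)) ≥ entropy μ Y - Real.log K ∧
    condEntropy μ' (fun ω => X₂ ω + Y' ω) (fun ω => (X₁ ω, Y₀ ω)) ≤
      entropy μ X / 2 + entropy μ Y / 2 + 7 * Real.log K := by
  have hX₁ := hcopy₁.entropy_fst_eq
  have hX₂ := hcopy₂.entropy_fst_eq
  have hY₀ := hcopy₁.entropy_snd_eq
  have hY' := hcopy'.entropy_snd_eq
  have hXY₁ := hcopy₁.entropy_eq
  have hXY₂ := hcopy₂.entropy_eq
  have hXY' := hcopy'.entropy_eq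
  have hS₁ := hcopy₁.entropy_add_eq
  have hS₂ := hcopy₂.entropy_add_eq
  have hS' := hcopy'.entropy_add_eq
  have hcond₂ := hci.symm.condEntropy_eq
  have hcond₃ := (condEntropy_pair_comm μ' Y' X₁ Y₀).trans hci'.snd_left.symm.condEntropy_eq
  have hcond := condEntropy_le_entropy μ' (fun ω => X₂ ω + Y' ω) (fun ω => (X₁ ω, Y₀ ω))
  have hX₁₂ := entropy_pair_le μ' X₁ X₂
  have hY₀Y' := entropy_pair_le μ' Y₀ Y'
  have hY'X₁ := entropy_pair_comm μ' Y' X₁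
  have hsumset := entropy_add_le_of_condIndepGiven μ' hci'
  simp only [condEntropy] at hcond₂ hcond₃ hcond ⊢
  exact ⟨hci'.weak_union, by linarith, by linarith, by linarith⟩

/-- entropy Balog–Szemerédi–Gowers lemma: with
`H(X,Y) ≥ H(X) + H(Y) − log K` and `H(X+Y) ≤ H(X)/2 + H(Y)/2 + log K`, if `X₁, X₂` are
conditionally independent trials of `X` given `Y`, and `Y'` is such that `(X₁,X₂,Y)` and
`Y'` are conditionally independent given `X₁` with `(X₁,Y')` a copy of `(X₁,Y)`, then
`X₂` and `Y'` are conditionally independent given `(X₁,Y)`,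
`H(X₂|X₁,Y) ≥ H(X) − log K`, `H(Y'|X₁,Y) ≥ H(Y) − log K`, and
`H(X₂+Y'|X₁,Y) ≤ H(X)/2 + H(Y)/2 + 7·log K`. -/
theorem entropy_bsg {G Ω Ω' : Type*} [AddCommGroup G] [Fintype Ω] [Fintype Ω']
    (μ : FinProb Ω) (X Y : Ω → G) (K : ℝ) (hK : 1 ≤ K)
    (hent : entropy μ (fun ω => (X ω, Y ω)) ≥ entropy μ X + entropy μ Y - Real.log K)
    (hsum : entropy μ (fun ω => X ω + Y ω) ≤
      entropy μ X / 2 + entropy μ Y / 2 + Real.log K)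
    (μ' : FinProb Ω') (X₁ X₂ Y₀ Y' : Ω' → G)
    -- `X₁, X₂` are conditionally independent trials of `X` given `Y` (realised by `Y₀`):
    (hcopy₁ : IdentDist μ' (fun ω => (X₁ ω, Y₀ ω)) μ (fun ω => (X ω, Y ω)))
    (hcopy₂ : IdentDist μ' (fun ω => (X₂ ω, Y₀ ω)) μ (fun ω => (X ω, Y ω)))
    (hci : CondIndepGiven μ' X₁ X₂ Y₀)
    -- `(X₁, Y')` is a copy of `(X₁, Y₀)`, with `(X₂, Y₀)` and `Y'` conditionally
    -- independent given `X₁`: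
    (hcopy' : IdentDist μ' (fun ω => (X₁ ω, Y' ω)) μ' (fun ω => (X₁ ω, Y₀ ω)))
    (hci' : CondIndepGiven μ' (fun ω => (X₂ ω, Y₀ ω)) Y' X₁) :
    CondIndepGiven μ' X₂ Y' (fun ω => (X₁ ω, Y₀ ω)) ∧
    condEntropy μ' X₂ (fun ω => (X₁ ω, Y₀ ω)) ≥ entropy μ X - Real.log K ∧
    condEntropy μ' Y' (fun ω => (X₁ ω, Y₀ ω)) ≥ entropy μ Y - Real.log K ∧
    condEntropy μ' (fun ω => X₂ ω + Y' ω) (fun ω => (X₁ ω, Y₀ ω)) ≤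
      entropy μ X / 2 + entropy μ Y / 2 + 7 * Real.log K :=
  entropy_bsg_general μ X Y K hent hsum μ' X₁ X₂ Y₀ Y' hcopy₁ hcopy₂ hci hcopy' hci'
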